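/- In a locally finite topos, if every essential monomorphism out of A is an isomorphism, then A is injective. -/

import Mathlib

open CategoryTheory CategoryTheory.Limits

universe u v

/-- A subobject classifier, phrased as a property of a category with a terminal object. -/
class HasSubobjectClassifier' (C : Type u) [Category.{v} C] [HasTerminal C] : Prop where
  exists_classifier : ∃ (Ω : C) (truth : ⊤_ C ⟶ Ω), ∀ {U X : C} (m : U ⟶ X), Mono m →
    ∃! χ : X ⟶ Ω, IsPullback m (terminal.from U) χ truth

/-- A monomorphism `e` is essential if whenever `e ≫ g` is monic, so is `g`. -/
def Essential {C : Type u} [Category.{v} C] {A B : C} (e : A ⟶ B) : Prop :=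
  Mono e ∧ ∀ ⦃X : C⦄ (g : B ⟶ X), Mono (e ≫ g) → Mono g

/-!
`A` embeds into the injective object `Ω^A` by the singleton map. As long as the current
extension `A ↪ E` is not essential, some `g : E ⟶ X` with `A ↪ E ⟶ X` monic is not monic, and
`A` embeds into the image of `g` through a proper epi `E ⟶ I`. The number of relations
`E × E ⟶ Ω` strictly drops along a proper epi: if every relation on `E` were reindexed from one
on `I`, so would be the diagonal, forcing the epi to be monic and hence (a topos being balanced)
invertible. So the process stops at an essential extension of `A`, which by hypothesis is an
isomorphism; its inverse exhibits `A` as a retract of `Ω^A`.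
-/

open MonoidalCategory MonoidalClosed CartesianMonoidalCategory CartesianClosed

theorem HasSubobjectClassifier'.nonempty_classifier (C : Type u) [Category.{v} C] [HasTerminal C]
    [HasSubobjectClassifier' C] : Nonempty (Subobject.Classifier C) := by
  obtain ⟨Ω, truth, h⟩ := HasSubobjectClassifier'.exists_classifier (C := C)
  choose χ hχ hχ_uniq using fun {U X : C} (m : U ⟶ X) [Mono m] => h m inferInstance
  exact ⟨.mkOfTerminalΩ₀ _ terminalIsTerminal Ω truth χ hχ hχ_uniq⟩

namespace CategoryTheory.CartesianMonoidalCategory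

variable {C : Type u} [Category.{v} C] [CartesianMonoidalCategory C]

instance mono_whiskerLeft (A : C) {X Y : C} (f : X ⟶ Y) [Mono f] : Mono (A ◁ f) :=
  ⟨fun p q hpq => by
    ext
    · simpa using hpq =≫ fst A Y
    · rw [← cancel_mono f]
      simpa using hpq =≫ snd A Y⟩

instance preservesMonomorphisms_tensorLeft (A : C) : (tensorLeft A).PreservesMonomorphisms :=
  ⟨fun f _ => mono_whiskerLeft A f⟩

instance epi_tensorHom [MonoidalClosed C] {X Y X' Y' : C} (f : X ⟶ Y) (g : X' ⟶ Y') [Epi f]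
    [Epi g] : Epi (f ⊗ₘ g) := by
  let : BraidedCategory C := .ofCartesianMonoidalCategory
  have : Epi (X' ◁ f) := (tensorLeft X').map_epi f
  have : Epi (Y ◁ g) := (tensorLeft Y).map_epi g
  have hf : f ▷ X' = (β_ X X').hom ≫ X' ◁ f ≫ (β_ Y X').inv := by
    rw [← BraidedCategory.braiding_naturality_left_assoc, Iso.hom_inv_id, Category.comp_id]
  rw [MonoidalCategory.tensorHom_def, hf]
  infer_instance

end CategoryTheory.CartesianMonoidalCategory

namespace CategoryTheory.Limits

variable {C : Type u} [Category.{v} C] [HasPullbacks C] [∀ X : C, Finite (Subobject X)]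

theorem hasImage_of_finite_subobject {X Y : C} (f : X ⟶ Y) : HasImage f := by
  classical
  have := Fintype.ofFinite (Subobject Y)
  let M : Subobject Y := (Finset.univ.filter (·.Factors f)).inf id
  have hM : M.Factors f := (Subobject.finset_inf_factors f).2 (by simp)
  exact HasImage.mk ⟨⟨M, M.arrow, M.factorThru f hM, by simp⟩,
    { lift := fun F => Subobject.ofLEMk M F.m
        (Finset.inf_le (Finset.mem_filter.2
          ⟨Finset.mem_univ _, (Subobject.mk_factors_iff F.m f).2 ⟨F.e, F.fac⟩⟩))
      lift_fac := fun F => Subobject.ofLEMk_comp _ }⟩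

theorem exists_epi_not_isIso_of_not_essential [HasEqualizers C] {A E : C} (m : A ⟶ E) [Mono m]
    (hm : ¬ Essential m) : ∃ (I : C) (e : E ⟶ I), Epi e ∧ ¬ IsIso e ∧ Mono (m ≫ e) := by
  obtain ⟨X, g, hmg, hg⟩ : ∃ (X : C) (g : E ⟶ X), Mono (m ≫ g) ∧ ¬ Mono g := by
    simpa [Essential, ‹Mono m›] using hm
  have := hasImage_of_finite_subobject g
  refine ⟨image g, factorThruImage g, inferInstance,
    fun _ => hg (image.fac g ▸ mono_comp _ _), ?_⟩
  rw [← image.fac g, ← Category.assoc] at hmg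
  exact mono_of_mono _ (image.ι g)

end CategoryTheory.Limits

namespace CategoryTheory.Subobject.Classifier

variable {C : Type u} [Category.{v} C] (𝒞 : Classifier C)

theorem comp_χ_eq_iff {U X T : C} (m : U ⟶ X) [Mono m] (g : T ⟶ X) :
    g ≫ 𝒞.χ m = 𝒞.χ₀ T ≫ 𝒞.truth ↔ ∃ k, k ≫ m = g := by
  constructor
  · intro h
    exact ⟨(𝒞.isPullback m).lift g (𝒞.χ₀ T) h, (𝒞.isPullback m).lift_fst _ _ _⟩
  · rintro ⟨k, rfl⟩
    rw [Category.assoc, (𝒞.isPullback m).w, ← Category.assoc, Subsingleton.elim (k ≫ _) (𝒞.χ₀ T)]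

theorem comp_χ_comp {Z X Y : C} (i : Z ⟶ X) (f : X ⟶ Y) [Mono i] [Mono f] :
    f ≫ 𝒞.χ (i ≫ f) = 𝒞.χ i :=
  𝒞.uniq i <| (IsPullback.of_vert_isIso_mono (snd := 𝟙 Z) ⟨by simp⟩).paste_vert
    (𝒞.isPullback (i ≫ f))

section Pullbacks

variable [HasPullbacks C]

theorem injective_Ω : Injective 𝒞.Ω :=
  ⟨fun u f _ => by
    obtain ⟨Z, i, _, rfl⟩ := 𝒞.surjective_χ u
    exact ⟨_, 𝒞.comp_χ_comp i f⟩⟩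

theorem finite_subobject {X : C} [Finite (X ⟶ 𝒞.Ω)] : Finite (Subobject X) :=
  .of_equiv _ 𝒞.representableBy.homEquiv

end Pullbacks

section Cartesian

variable [CartesianMonoidalCategory C]

theorem lift_comp_χ_diag_eq_iff {T B : C} (a b : T ⟶ B) :
    lift a b ≫ 𝒞.χ (lift (𝟙 B) (𝟙 B)) = 𝒞.χ₀ T ≫ 𝒞.truth ↔ a = b := by
  rw [comp_χ_eq_iff]
  constructor
  · rintro ⟨k, hk⟩
    have ha := hk =≫ fst B B
    have hb := hk =≫ snd B B
    simp only [comp_lift, Category.comp_id, lift_fst, lift_snd] at ha hb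
    rw [← ha, ← hb]
  · rintro rfl
    exact ⟨a, by ext <;> simp⟩

theorem mono_of_comp_eq_χ_diag {E I : C} (e : E ⟶ I) {ψ : I ⊗ I ⟶ 𝒞.Ω}
    (hψ : (e ⊗ₘ e) ≫ ψ = 𝒞.χ (lift (𝟙 E) (𝟙 E))) : Mono e :=
  ⟨fun a b hab => by
    rw [← lift_comp_χ_diag_eq_iff, ← hψ, lift_map_assoc, hab, ← lift_map_assoc, hψ,
      lift_comp_χ_diag_eq_iff]⟩

variable [MonoidalClosed C]

noncomputable def singleton (B : C) : B ⟶ B ⟹ 𝒞.Ω :=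
  curry (𝒞.χ (lift (𝟙 B) (𝟙 B)))

instance mono_singleton (B : C) : Mono (𝒞.singleton B) :=
  ⟨fun {T} a b hab => by
    have h : B ◁ a ≫ 𝒞.χ (lift (𝟙 B) (𝟙 B)) = B ◁ b ≫ 𝒞.χ (lift (𝟙 B) (𝟙 B)) := by
      apply curry_injective
      rw [curry_natural_left, curry_natural_left]
      exact hab
    have hba : lift b a ≫ 𝒞.χ (lift (𝟙 B) (𝟙 B)) = lift b b ≫ 𝒞.χ (lift (𝟙 B) (𝟙 B)) := by
      simpa using lift b (𝟙 T) ≫= h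
    rw [eq_comm, ← lift_comp_χ_diag_eq_iff, hba, lift_comp_χ_diag_eq_iff]⟩

theorem card_hom_tensor_Ω_lt_of_epi {E I : C} (e : E ⟶ I) [Epi e] (he : ¬ IsIso e)
    [Finite (E ⊗ E ⟶ 𝒞.Ω)] : Nat.card (I ⊗ I ⟶ 𝒞.Ω) < Nat.card (E ⊗ E ⟶ 𝒞.Ω) := by
  have : HasSubobjectClassifier C := ⟨⟨𝒞⟩⟩
  by_contra! hle
  have hinj : Function.Injective ((e ⊗ₘ e) ≫ · : (I ⊗ I ⟶ 𝒞.Ω) → _) :=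
    fun _ _ h => (cancel_epi _).1 h
  obtain ⟨ψ, hψ⟩ := (hinj.bijective_of_nat_card_le hle).2 (𝒞.χ (lift (𝟙 E) (𝟙 E)))
  have := 𝒞.mono_of_comp_eq_χ_diag e hψ
  exact he (isIso_of_mono_of_epi e)

theorem injective_ihom_Ω [HasPullbacks C] (B : C) : Injective (B ⟹ 𝒞.Ω) :=
  (ihom.adjunction B).map_injective _ 𝒞.injective_Ω

end Cartesian

theorem exists_essential_comp [HasFiniteLimits C] [CartesianMonoidalCategory C] [MonoidalClosed C]
    [∀ X : C, Finite (X ⟶ 𝒞.Ω)] {A E : C} (m : A ⟶ E) [Mono m] :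
    ∃ (F : C) (p : E ⟶ F), Essential (m ≫ p) := by
  have : ∀ X : C, Finite (Subobject X) := fun _ => 𝒞.finite_subobject
  induction hn : Nat.card (E ⊗ E ⟶ 𝒞.Ω) using Nat.strong_induction_on generalizing E with
  | _ n ih =>
  by_cases hm : Essential m
  · exact ⟨E, 𝟙 E, by rwa [Category.comp_id]⟩
  obtain ⟨I, e, _, he, _⟩ := exists_epi_not_isIso_of_not_essential m hm
  obtain ⟨F, p, hp⟩ := ih _ (hn ▸ 𝒞.card_hom_tensor_Ω_lt_of_epi e he) (m ≫ e) rfl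
  exact ⟨F, e ≫ p, by rwa [← Category.assoc]⟩

end CategoryTheory.Subobject.Classifier

theorem injective_of_no_proper_essential {C : Type u} [Category.{v} C] [HasFiniteLimits C] [CartesianMonoidalCategory C]
    [MonoidalClosed C] [HasSubobjectClassifier' C]
    (locallyFinite : ∀ A B : C, Finite (A ⟶ B))
    (A : C) (h : ∀ (B : C) (e : A ⟶ B), Essential e → IsIso e) :
    Injective A := by
  obtain ⟨𝒞⟩ := HasSubobjectClassifier'.nonempty_classifier C
  have : ∀ X : C, Finite (X ⟶ 𝒞.Ω) := fun X => locallyFinite X 𝒞.Ω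
  have := 𝒞.injective_ihom_Ω A
  obtain ⟨F, p, hp⟩ := 𝒞.exists_essential_comp (𝒞.singleton A)
  have := h F _ hp
  exact Retract.injective
    ⟨𝒞.singleton A, p ≫ inv (𝒞.singleton A ≫ p), by rw [← Category.assoc, IsIso.hom_inv_id]⟩
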